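/- With the notation of the martingale decomposition of the variance: for ξ = f(X₁,…,X_n) square-integrable with X_i independent, letting E_k denote conditional expectation integrating out only X_k, one has Var(ξ) ≤ ∑_{k=1}^n E[ |ξ - E_k[ξ]|² ]. -/

import Mathlib

/-!
Let `M t = E[ξ | X i, i < t]`. The law of total variance for `M (t + 1)` given the first `t`
variables gives `Var (M (t + 1)) - Var (M t) = E[(M (t + 1) - M t)²]`, so `Var ξ` is the sum of
the squared martingale increments. Because `X k` is independent of the other variables,
conditioning `E_k ξ` on the first `k + 1` variables amounts to conditioning it on the first `k`,
which gives `M k`. Hence `M (k + 1) - M k = E[ξ - E_k ξ | X i, i ≤ k]`, and conditional Jensen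
bounds its second moment by `E[(ξ - E_k ξ)²]`.
-/

open MeasureTheory ProbabilityTheory

/-- The σ-algebra generated by all the variables `X i` with `i ≠ k`. -/
def exceptSigma {Ω : Type*} {n : ℕ} (X : Fin n → Ω → ℝ) (k : Fin n) : MeasurableSpace Ω :=
  ⨆ i : Fin n, ⨆ _ : i ≠ k, MeasurableSpace.comap (X i) inferInstance

/-- The σ-algebra generated by all the variables `X i`. -/
def allSigma {Ω : Type*} {n : ℕ} (X : Fin n → Ω → ℝ) : MeasurableSpace Ω :=
  ⨆ i : Fin n, MeasurableSpace.comap (X i) inferInstance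

section SetIntegral

variable {Ω E : Type*} {m0 : MeasurableSpace Ω} {μ : Measure Ω}
  [NormedAddCommGroup E] [NormedSpace ℝ E]

theorem setIntegral_eq_of_isPiSystem {m : MeasurableSpace Ω} (hm : m ≤ m0) {C : Set (Set Ω)}
    (hmC : m = MeasurableSpace.generateFrom C) (hC : IsPiSystem C) {f g : Ω → E}
    (hf : Integrable f μ) (hg : Integrable g μ) (h_univ : ∫ x, f x ∂μ = ∫ x, g x ∂μ)
    (h_eq : ∀ s ∈ C, ∫ x in s, f x ∂μ = ∫ x in s, g x ∂μ) {s : Set Ω}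
    (hs : MeasurableSet[m] s) : ∫ x in s, f x ∂μ = ∫ x in s, g x ∂μ := by
  induction s, hs using MeasurableSpace.induction_on_inter hmC hC with
  | empty => simp
  | basic t ht => exact h_eq t ht
  | compl t ht iht =>
    rw [setIntegral_compl (hm t ht) hf, setIntegral_compl (hm t ht) hg, h_univ, iht]
  | iUnion t hdisj ht iht =>
    rw [integral_iUnion (fun i => hm _ (ht i)) hdisj hf.integrableOn,
      integral_iUnion (fun i => hm _ (ht i)) hdisj hg.integrableOn]
    exact tsum_congr iht

end SetIntegral

section PiSystem

variable {Ω : Type*}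

theorem isPiSystem_image2_inter (F H : MeasurableSpace Ω) :
    IsPiSystem (Set.image2 (· ∩ ·) {s | MeasurableSet[F] s} {s | MeasurableSet[H] s}) := by
  rintro _ ⟨a₁, ha₁, b₁, hb₁, rfl⟩ _ ⟨a₂, ha₂, b₂, hb₂, rfl⟩ -
  exact ⟨a₁ ∩ a₂, ha₁.inter ha₂, b₁ ∩ b₂, hb₁.inter hb₂, Set.inter_inter_inter_comm _ _ _ _⟩

theorem sup_eq_generateFrom_image2_inter (F H : MeasurableSpace Ω) :
    F ⊔ H = MeasurableSpace.generateFrom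
      (Set.image2 (· ∩ ·) {s | MeasurableSet[F] s} {s | MeasurableSet[H] s}) := by
  refine le_antisymm (sup_le (fun a ha => ?_) (fun b hb => ?_))
    (MeasurableSpace.generateFrom_le ?_)
  · exact MeasurableSpace.measurableSet_generateFrom ⟨a, ha, Set.univ, .univ, Set.inter_univ a⟩
  · exact MeasurableSpace.measurableSet_generateFrom ⟨Set.univ, .univ, b, hb, Set.univ_inter b⟩
  · rintro _ ⟨a, ha, b, hb, rfl⟩
    exact (le_sup_left (b := H) a ha).inter (le_sup_right (a := F) b hb)

end PiSystem

section Indep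

variable {Ω : Type*} {m0 : MeasurableSpace Ω} {μ : Measure Ω} [IsFiniteMeasure μ]
  {F G H : MeasurableSpace Ω}

theorem setIntegral_inter_eq_measureReal_mul_of_indep (hG : G ≤ m0) (hH : H ≤ m0)
    (hGH : Indep G H μ) {g : Ω → ℝ} (hg : StronglyMeasurable[G] g) (hg_int : Integrable g μ)
    {a b : Set Ω} (ha : MeasurableSet[G] a) (hb : MeasurableSet[H] b) :
    ∫ x in a ∩ b, g x ∂μ = μ.real b * ∫ x in a, g x ∂μ :=
  calc ∫ x in a ∩ b, g x ∂μ = ∫ x in b, a.indicator g x ∂μ := by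
        rw [setIntegral_indicator (hG a ha), Set.inter_comm]
    _ = ∫ x in b, (μ[a.indicator g | H]) x ∂μ :=
        (setIntegral_condExp hH (hg_int.indicator (hG a ha)) hb).symm
    _ = ∫ x in b, (∫ y, a.indicator g y ∂μ) ∂μ := by
        refine setIntegral_congr_ae (hH b hb) ?_
        filter_upwards [condExp_indep_eq hG hH (hg.indicator ha) hGH] with x hx _ using hx
    _ = μ.real b * ∫ x in a, g x ∂μ := by
        rw [setIntegral_const, integral_indicator (hG a ha), smul_eq_mul]

theorem condExp_sup_indep_eq (hG : G ≤ m0) (hH : H ≤ m0) (hFG : F ≤ G) (hGH : Indep G H μ)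
    {f : Ω → ℝ} (hf : StronglyMeasurable[G] f) (hf_int : Integrable f μ) :
    μ[f | F ⊔ H] =ᵐ[μ] μ[f | F] := by
  have hF : F ≤ m0 := hFG.trans hG
  have hFH : F ⊔ H ≤ m0 := sup_le hF hH
  refine (ae_eq_condExp_of_forall_setIntegral_eq hFH hf_int
    (fun _ _ _ => integrable_condExp.integrableOn) (fun s hs _ => ?_)
    (stronglyMeasurable_condExp.mono le_sup_left).aestronglyMeasurable).symm
  refine setIntegral_eq_of_isPiSystem hFH (sup_eq_generateFrom_image2_inter F H)
    (isPiSystem_image2_inter F H) integrable_condExp hf_int (integral_condExp hF) ?_ hs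
  rintro _ ⟨a, ha, b, hb, rfl⟩
  rw [setIntegral_inter_eq_measureReal_mul_of_indep hG hH hGH
      (stronglyMeasurable_condExp.mono hFG) integrable_condExp (hFG a ha) hb,
    setIntegral_inter_eq_measureReal_mul_of_indep hG hH hGH hf hf_int (hFG a ha) hb,
    setIntegral_condExp hF hf_int ha]

end Indep

section Variance

variable {Ω : Type*} {m0 : MeasurableSpace Ω} {μ : Measure Ω} {X : Ω → ℝ}

theorem integral_sq_condExp_le [IsFiniteMeasure μ] {m : MeasurableSpace Ω} (hm : m ≤ m0)
    (hX : MemLp X 2 μ) : ∫ ω, (μ[X | m]) ω ^ 2 ∂μ ≤ ∫ ω, X ω ^ 2 ∂μ := by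
  have h_jensen : ∀ᵐ ω ∂μ, (μ[X | m]) ω ^ 2 ≤ (μ[X ^ 2 | m]) ω := by
    filter_upwards [condVar_ae_eq_condExp_sq_sub_sq_condExp hm hX,
      condExp_nonneg (m := m) (f := (X - μ[X | m]) ^ 2) (ae_of_all μ fun ω => sq_nonneg _)]
      with ω h_eq h_nonneg
    rw [condVar] at h_eq
    rw [Pi.zero_apply, h_eq, Pi.sub_apply, Pi.pow_apply, sub_nonneg] at h_nonneg
    exact h_nonneg
  calc ∫ ω, (μ[X | m]) ω ^ 2 ∂μ ≤ ∫ ω, (μ[X ^ 2 | m]) ω ∂μ :=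
        integral_mono_ae (hX.condExp one_le_two).integrable_sq integrable_condExp h_jensen
    _ = ∫ ω, X ω ^ 2 ∂μ := integral_condExp hm

variable [IsProbabilityMeasure μ]

theorem variance_condExp_sub_variance_condExp {m₁ m₂ : MeasurableSpace Ω} (h₁₂ : m₁ ≤ m₂)
    (h₂ : m₂ ≤ m0) (hX : MemLp X 2 μ) :
    Var[μ[X | m₂]; μ] - Var[μ[X | m₁]; μ] = ∫ ω, ((μ[X | m₂]) ω - (μ[X | m₁]) ω) ^ 2 ∂μ := by
  have h_tower : μ[μ[X | m₂] | m₁] =ᵐ[μ] μ[X | m₁] := condExp_condExp_of_le h₁₂ h₂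
  have h_total :=
    integral_condVar_add_variance_condExp (h₁₂.trans h₂) (hX.condExp (m := m₂) one_le_two)
  rw [variance_congr h_tower, condVar, integral_condExp (h₁₂.trans h₂)] at h_total
  rw [← h_total, add_sub_cancel_right]
  exact integral_congr_ae (h_tower.mono fun ω hω => by simp [hω])

theorem variance_condExp_sub_eq_sum (ℱ : Filtration ℕ m0) (hX : MemLp X 2 μ) (n : ℕ) :
    Var[μ[X | ℱ n]; μ] - Var[μ[X | ℱ 0]; μ] =
      ∑ k ∈ Finset.range n, ∫ ω, ((μ[X | ℱ (k + 1)]) ω - (μ[X | ℱ k]) ω) ^ 2 ∂μ := by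
  rw [← Finset.sum_range_sub (fun t => Var[μ[X | ℱ t]; μ])]
  exact Finset.sum_congr rfl fun k _ =>
    variance_condExp_sub_variance_condExp (ℱ.mono k.le_succ) (ℱ.le _) hX

theorem integral_sq_condExp_sup_sub_le {F G H : MeasurableSpace Ω} (hG : G ≤ m0) (hH : H ≤ m0)
    (hFG : F ≤ G) (hGH : Indep G H μ) (hX : MemLp X 2 μ) :
    ∫ ω, ((μ[X | F ⊔ H]) ω - (μ[X | F]) ω) ^ 2 ∂μ ≤ ∫ ω, (X ω - (μ[X | G]) ω) ^ 2 ∂μ := by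
  have h_indep : μ[μ[X | G] | F ⊔ H] =ᵐ[μ] μ[X | F] :=
    (condExp_sup_indep_eq hG hH hFG hGH stronglyMeasurable_condExp integrable_condExp).trans
      (condExp_condExp_of_le hFG hG)
  have h_incr : μ[X - μ[X | G] | F ⊔ H] =ᵐ[μ] μ[X | F ⊔ H] - μ[X | F] :=
    (condExp_sub (hX.integrable one_le_two) integrable_condExp _).trans
      (Filter.EventuallyEq.rfl.sub h_indep)
  calc ∫ ω, ((μ[X | F ⊔ H]) ω - (μ[X | F]) ω) ^ 2 ∂μ
        = ∫ ω, (μ[X - μ[X | G] | F ⊔ H]) ω ^ 2 ∂μ :=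
          integral_congr_ae (h_incr.mono fun ω hω => by simp [hω])
    _ ≤ ∫ ω, (X - μ[X | G]) ω ^ 2 ∂μ :=
          integral_sq_condExp_le (sup_le (hFG.trans hG) hH) (hX.sub (hX.condExp one_le_two))
    _ = ∫ ω, (X ω - (μ[X | G]) ω) ^ 2 ∂μ := rfl

end Variance

section Prefix

variable {Ω : Type*} {m0 : MeasurableSpace Ω} {n : ℕ}

def prefixFiltration (m : Fin n → MeasurableSpace Ω) (hm : ∀ i, m i ≤ m0) : Filtration ℕ m0 where
  seq t := ⨆ (i : Fin n) (_ : (i : ℕ) < t), m i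
  mono' _ _ hst := iSup₂_mono' fun i hi => ⟨i, hi.trans_le hst, le_rfl⟩
  le' _ := iSup₂_le fun i _ => hm i

variable {m : Fin n → MeasurableSpace Ω} (hm : ∀ i, m i ≤ m0)

theorem prefixFiltration_zero : prefixFiltration m hm 0 = ⊥ := by
  simp [prefixFiltration]

theorem prefixFiltration_self : prefixFiltration m hm n = ⨆ i, m i := by
  simp [prefixFiltration]

theorem prefixFiltration_succ (k : Fin n) :
    prefixFiltration m hm ((k : ℕ) + 1) = prefixFiltration m hm k ⊔ m k := by
  refine le_antisymm (iSup₂_le fun i hi => ?_) (sup_le ?_ ?_)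
  · rcases Nat.lt_succ_iff_lt_or_eq.mp hi with hik | hik
    · exact le_sup_of_le_left (le_iSup₂_of_le i hik le_rfl)
    · exact le_sup_of_le_right (Fin.ext hik ▸ le_rfl)
  · exact iSup₂_mono' fun i hi => ⟨i, hi.trans k.val.lt_succ_self, le_rfl⟩
  · exact le_iSup₂_of_le k k.val.lt_succ_self le_rfl

theorem prefixFiltration_le_iSup_ne (k : Fin n) :
    prefixFiltration m hm k ≤ ⨆ (i) (_ : i ≠ k), m i :=
  iSup₂_mono' fun i hi => ⟨i, fun h => hi.ne (congrArg Fin.val h), le_rfl⟩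

end Prefix

theorem indep_iSup_ne {Ω ι : Type*} {m0 : MeasurableSpace Ω} {μ : Measure Ω}
    {m : ι → MeasurableSpace Ω} (hm : ∀ i, m i ≤ m0) (h_indep : iIndep m μ) (k : ι) :
    Indep (⨆ (i) (_ : i ≠ k), m i) (m k) μ := by
  simpa using indep_iSup_of_disjoint hm h_indep (S := {i | i ≠ k}) (T := {k}) (by simp)

theorem variance_le_sum_integral_sq_sub_condExp {Ω : Type*} {m0 : MeasurableSpace Ω}
    {μ : Measure Ω} [IsProbabilityMeasure μ] {n : ℕ} {m : Fin n → MeasurableSpace Ω}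
    (hm : ∀ i, m i ≤ m0) (h_indep : iIndep m μ) {X : Ω → ℝ} (hX : MemLp X 2 μ)
    (hX_meas : StronglyMeasurable[⨆ i, m i] X) :
    Var[X; μ] ≤ ∑ k, ∫ ω, (X ω - (μ[X | ⨆ (i) (_ : i ≠ k), m i]) ω) ^ 2 ∂μ := by
  set ℱ := prefixFiltration m hm
  have h_last : μ[X | ℱ n] = X := condExp_of_stronglyMeasurable (ℱ.le n)
    (by rwa [prefixFiltration_self]) (hX.integrable one_le_two)
  have h_first : Var[μ[X | ℱ 0]; μ] = 0 := by
    rw [prefixFiltration_zero, condExp_bot, variance_eq_integral aemeasurable_const]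
    simp
  calc Var[X; μ]
      = ∑ k ∈ Finset.range n, ∫ ω, ((μ[X | ℱ (k + 1)]) ω - (μ[X | ℱ k]) ω) ^ 2 ∂μ := by
        rw [← variance_condExp_sub_eq_sum ℱ hX, h_last, h_first, sub_zero]
    _ = ∑ k : Fin n, ∫ ω, ((μ[X | ℱ k ⊔ m k]) ω - (μ[X | ℱ k]) ω) ^ 2 ∂μ := by
        rw [← Fin.sum_univ_eq_sum_range]
        simp only [ℱ, prefixFiltration_succ]
    _ ≤ _ := Finset.sum_le_sum fun k _ => integral_sq_condExp_sup_sub_le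
        (iSup₂_le fun i _ => hm i) (hm k) (prefixFiltration_le_iSup_ne hm k)
        (indep_iSup_ne hm h_indep k) hX

/-- Efron–Stein type martingale bound: for a square-integrable function
`ξ = f(X₁,…,Xₙ)` of independent random variables,
`Var(ξ) ≤ ∑_{k=1}^n E[|ξ - E_k[ξ]|²]`, where `E_k` is the conditional expectation
integrating out only `X_k` (i.e. conditioning on all `X_i`, `i ≠ k`). -/
theorem variance_le_sum_martingale {Ω : Type*} {m0 : MeasurableSpace Ω}
    (μ : Measure Ω) [IsProbabilityMeasure μ] (n : ℕ) (X : Fin n → Ω → ℝ)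
    (hmeas : ∀ i, Measurable (X i))
    (hindep : iIndepFun X μ)
    (ξ : Ω → ℝ) (hξ : MemLp ξ 2 μ)
    (hξmeas : StronglyMeasurable[allSigma X] ξ) :
    variance ξ μ ≤
      ∑ k : Fin n, ∫ ω, |ξ ω - (μ[ξ | exceptSigma X k]) ω| ^ 2 ∂μ := by
  simp_rw [sq_abs]
  exact variance_le_sum_integral_sq_sub_condExp (fun i => (hmeas i).comap_le)
    ((iIndepFun_iff_iIndep _ X μ).mp hindep) hξ hξmeas
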